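/- Let s, k, ℓ, n, m be integers with s ≥ 0, k ≥ ℓ ≥ s+1, n ≥ k+ℓ and m > ℓ+s. Let ℱ ⊆ {A ∈ C([n], k) : |A ∩ [m]| ≥ s+1} and 𝒢 ⊆ {B ∈ C([n], ℓ) : |B ∩ [m]| ≥ s+1} be cross-intersecting families. Then |ℱ| + |𝒢| ≤ C(n, k) − Σ_{i=0}^{s} C(m, i)·C(n−m, k−i). -/

import Mathlib

/-
With `t = s + 1`, the right-hand side counts the family `R(n, k, t)` of `k`-subsets of `[n]`
meeting `[m]` in at least `t` points (complement in `C([n], k)`, sorted by `i = |A ∩ [m]| < t`),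
and `|ℱ| + |𝒢| ≤ |R(n, k, t)|` is proved by induction on `n`.
For `n = k + ℓ`, complementation in `[n]` maps `𝒢` injectively into `R(n, k, t)` and away from
`ℱ`; `m ≥ ℓ + t` keeps the complements in `R(n, k, t)`.
For `n > k + ℓ`, shift both families towards `n` by `{x} → {n}` compressions, which preserve
cross-intersection and the restrictions, and split all three families at `n`. The parts avoiding
`n` are handled at `n - 1`. The links at `n` still cross-intersect, since `𝒢` is shifted and
`n > k + ℓ` leaves a point outside `A ∪ B`; they lie in `R(n - 1, ·, t')` with `t' = t - 1` if
`n ≤ m` and `t' = t` otherwise, and `t' ≤ ℓ - 1` as soon as the link of `𝒢` is nonempty.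
-/

open Finset
open scoped FinsetFamily

namespace UV

variable {α : Type*} [DecidableEq α] {i j a : α} {A B U : Finset α} {𝒜 ℬ : Finset (Finset α)}

lemma mem_and_notMem_of_compress_ne (h : compress {i} {j} A ≠ A) : j ∈ A ∧ i ∉ A := by
  unfold compress at h
  split_ifs at h with hc
  · simpa [and_comm] using hc
  · exact absurd rfl h

lemma compress_singleton_eq (hj : j ∈ A) (hi : i ∉ A) :
    compress {i} {j} A = insert i (A.erase j) := by
  rw [compress_of_disjoint_of_le (by simpa using hi) (by simpa using hj)]
  ext x
  simp only [sup_eq_union, mem_sdiff, mem_union, mem_singleton, mem_insert, mem_erase]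
  grind

lemma compress_subset (hA : A ⊆ U) (hi : i ∈ U) : compress {i} {j} A ⊆ U := by
  by_cases h : compress {i} {j} A = A
  · rwa [h]
  obtain ⟨hj, hi'⟩ := mem_and_notMem_of_compress_ne h
  rw [compress_singleton_eq hj hi']
  exact insert_subset hi ((erase_subset _ _).trans hA)

lemma card_inter_le_card_compress_inter (S : Finset α) (hS : j ∈ S → i ∈ S) :
    #(A ∩ S) ≤ #(compress {i} {j} A ∩ S) := by
  by_cases h : compress {i} {j} A = A
  · rw [h]
  obtain ⟨hj, hi⟩ := mem_and_notMem_of_compress_ne h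
  rw [compress_singleton_eq hj hi]
  by_cases hjS : j ∈ S
  · have hsub : insert i ((A ∩ S).erase j) ⊆ insert i (A.erase j) ∩ S := by
      intro x
      simp only [mem_insert, mem_erase, mem_inter]
      rintro (rfl | ⟨hx, hxA, hxS⟩)
      · exact ⟨Or.inl rfl, hS hjS⟩
      · exact ⟨Or.inr ⟨hx, hxA⟩, hxS⟩
    calc #(A ∩ S) = #(insert i ((A ∩ S).erase j)) := by
          rw [card_insert_of_notMem (fun h => hi (mem_inter.1 (mem_of_mem_erase h)).1),
            card_erase_add_one (mem_inter.2 ⟨hj, hjS⟩)]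
      _ ≤ _ := card_le_card hsub
  · refine card_le_card fun x hx => ?_
    simp only [mem_inter, mem_insert, mem_erase] at hx ⊢
    exact ⟨Or.inr ⟨fun h => hjS (h ▸ hx.2), hx.1⟩, hx.2⟩

lemma card_filter_mem_compression_lt (hB : B ∈ ℬ) (hcB : compress {i} {j} B ∉ ℬ) :
    #{A ∈ 𝓒 {i} {j} ℬ | j ∈ A} < #{A ∈ ℬ | j ∈ A} := by
  have hjB : j ∈ B := (mem_and_notMem_of_compress_ne fun h => hcB (h ▸ hB)).1
  refine card_lt_card ((ssubset_iff_of_subset fun A hA => ?_).2 ⟨B, ?_, ?_⟩)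
  · rw [mem_filter] at hA ⊢
    refine ⟨?_, hA.2⟩
    by_contra hA'
    exact disjoint_singleton_left.1 (disjoint_of_mem_compression_of_notMem hA.1 hA') hA.2
  · exact mem_filter.2 ⟨hB, hjB⟩
  · simp [mem_compression, hB, hcB]

theorem exists_shifted (P : Finset (Finset α) → Finset (Finset α) → Prop) (X : Set α) (a : α)
    (hP : ∀ x ∈ X, ∀ 𝒜 ℬ, P 𝒜 ℬ → P (𝓒 {x} {a} 𝒜) (𝓒 {x} {a} ℬ)) (h : P 𝒜 ℬ) :
    ∃ 𝒜' ℬ', #𝒜' = #𝒜 ∧ #ℬ' = #ℬ ∧ P 𝒜' ℬ' ∧ ∀ x ∈ X, ∀ B ∈ ℬ', compress {x} {a} B ∈ ℬ' := by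
  induction hN : #{B ∈ ℬ | a ∈ B} using Nat.strong_induction_on generalizing 𝒜 ℬ with
  | _ N ih =>
  by_cases hℬ : ∀ x ∈ X, ∀ B ∈ ℬ, compress {x} {a} B ∈ ℬ
  · exact ⟨𝒜, ℬ, rfl, rfl, h, hℬ⟩
  push Not at hℬ
  obtain ⟨x, hx, B, hB, hcB⟩ := hℬ
  obtain ⟨𝒜', ℬ', h𝒜', hℬ', hP', hshift⟩ :=
    ih _ (hN ▸ card_filter_mem_compression_lt hB hcB) (hP x hx _ _ h) rfl
  exact ⟨𝒜', ℬ', h𝒜'.trans (card_compression _ _ _), hℬ'.trans (card_compression _ _ _), hP',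
    hshift⟩

end UV

namespace Finset

variable {α : Type*} [DecidableEq α] {i j a x : α} {A B U S : Finset α} {k l t : ℕ}
  {𝒜 ℬ 𝒞 𝒜' ℬ' : Finset (Finset α)}

lemma memberSubfamily_mono (h : 𝒜 ⊆ ℬ) : 𝒜.memberSubfamily a ⊆ ℬ.memberSubfamily a :=
  image_subset_image (filter_subset_filter _ h)

lemma nonMemberSubfamily_mono (h : 𝒜 ⊆ ℬ) : 𝒜.nonMemberSubfamily a ⊆ ℬ.nonMemberSubfamily a :=
  filter_subset_filter _ h

lemma nonMemberSubfamily_subset : 𝒜.nonMemberSubfamily a ⊆ 𝒜 := filter_subset _ _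

lemma card_add_card_le_of_memberSubfamily_of_nonMemberSubfamily
    (hmem : #(𝒜.memberSubfamily a) + #(ℬ.memberSubfamily a) ≤ #(𝒞.memberSubfamily a))
    (hnon : #(𝒜.nonMemberSubfamily a) + #(ℬ.nonMemberSubfamily a) ≤ #(𝒞.nonMemberSubfamily a)) :
    #𝒜 + #ℬ ≤ #𝒞 := by
  rw [← card_memberSubfamily_add_card_nonMemberSubfamily a 𝒜,
    ← card_memberSubfamily_add_card_nonMemberSubfamily a ℬ,
    ← card_memberSubfamily_add_card_nonMemberSubfamily a 𝒞]
  omega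

def CrossIntersecting (𝒜 ℬ : Finset (Finset α)) : Prop :=
  ∀ A ∈ 𝒜, ∀ B ∈ ℬ, (A ∩ B).Nonempty

namespace CrossIntersecting

lemma symm (h : CrossIntersecting 𝒜 ℬ) : CrossIntersecting ℬ 𝒜 :=
  fun B hB A hA => inter_comm A B ▸ h A hA B hB

lemma mono (h : CrossIntersecting 𝒜 ℬ) (h𝒜 : 𝒜' ⊆ 𝒜) (hℬ : ℬ' ⊆ ℬ) :
    CrossIntersecting 𝒜' ℬ' :=
  fun A hA B hB => h A (h𝒜 hA) B (hℬ hB)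

lemma inter_compress_nonempty (h : CrossIntersecting 𝒜 ℬ) (hA : A ∈ 𝒜)
    (hcA : UV.compress {i} {j} A ∈ 𝒜) (hB : B ∈ ℬ) : (A ∩ UV.compress {i} {j} B).Nonempty := by
  by_cases hB' : UV.compress {i} {j} B = B
  · rw [hB']; exact h A hA B hB
  obtain ⟨hjB, hiB⟩ := UV.mem_and_notMem_of_compress_ne hB'
  rw [UV.compress_singleton_eq hjB hiB]
  obtain ⟨y, hy⟩ := h A hA B hB
  obtain ⟨hyA, hyB⟩ := mem_inter.1 hy
  by_cases hyj : y = j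
  · subst hyj
    by_cases hiA : i ∈ A
    · exact ⟨i, mem_inter.2 ⟨hiA, mem_insert_self _ _⟩⟩
    -- `A` moves too, and its image meets `B` away from `i ∉ B`
    obtain ⟨z, hz⟩ := h _ hcA B hB
    obtain ⟨hzA, hzB⟩ := mem_inter.1 hz
    rw [UV.compress_singleton_eq hyA hiA, mem_insert, mem_erase] at hzA
    obtain rfl | ⟨hzy, hzA⟩ := hzA
    · exact absurd hzB hiB
    · exact ⟨z, mem_inter.2 ⟨hzA, mem_insert_of_mem (mem_erase.2 ⟨hzy, hzB⟩)⟩⟩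
  · exact ⟨y, mem_inter.2 ⟨hyA, mem_insert_of_mem (mem_erase.2 ⟨hyj, hyB⟩)⟩⟩

lemma compression (h : CrossIntersecting 𝒜 ℬ) :
    CrossIntersecting (𝓒 {i} {j} 𝒜) (𝓒 {i} {j} ℬ) := by
  intro A hA B hB
  by_cases hA𝒜 : A ∈ 𝒜 <;> by_cases hBℬ : B ∈ ℬ
  · exact h A hA𝒜 B hBℬ
  · obtain ⟨-, B, hB', rfl⟩ := (UV.mem_compression.1 hB).resolve_left (fun h' => hBℬ h'.1)
    exact h.inter_compress_nonempty hA𝒜 ((UV.mem_compression.1 hA).resolve_right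
      (fun h' => h'.1 hA𝒜)).2 hB'
  · obtain ⟨-, A, hA', rfl⟩ := (UV.mem_compression.1 hA).resolve_left (fun h' => hA𝒜 h'.1)
    rw [inter_comm]
    exact h.symm.inter_compress_nonempty hBℬ ((UV.mem_compression.1 hB).resolve_right
      (fun h' => h'.1 hBℬ)).2 hA'
  · exact ⟨i, mem_inter.2 ⟨singleton_subset_iff.1 (UV.le_of_mem_compression_of_notMem hA hA𝒜),
      singleton_subset_iff.1 (UV.le_of_mem_compression_of_notMem hB hBℬ)⟩⟩

/-- If links `A`, `B` at `a` were disjoint, counting gives a point `x ∈ U` outside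
`insert a (A ∪ B)`, and shifting `insert a B` to `insert x B` gives a member of `ℬ` disjoint
from `insert a A`. -/
lemma memberSubfamily (h : CrossIntersecting 𝒜 ℬ)
    (hℬ : ∀ x ∈ U, ∀ B ∈ ℬ, UV.compress {x} {a} B ∈ ℬ)
    (hcard : ∀ A ∈ 𝒜, ∀ B ∈ ℬ, #A + #B ≤ #U) :
    CrossIntersecting (𝒜.memberSubfamily a) (ℬ.memberSubfamily a) := by
  intro A hA B hB
  rw [mem_memberSubfamily] at hA hB
  by_contra hAB
  rw [not_nonempty_iff_eq_empty, ← disjoint_iff_inter_eq_empty] at hAB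
  have hlt : #(insert a (A ∪ B)) < #U := by
    have hsize := hcard _ hA.1 _ hB.1
    rw [card_insert_of_notMem hA.2, card_insert_of_notMem hB.2] at hsize
    have := card_insert_le a (A ∪ B)
    rw [card_union_of_disjoint hAB] at this
    omega
  obtain ⟨x, hxU, hx⟩ := exists_mem_notMem_of_card_lt_card hlt
  have hxB : insert x B ∈ ℬ := by
    have := hℬ x hxU _ hB.1
    rwa [UV.compress_singleton_eq (mem_insert_self a B) (by grind), erase_insert hB.2] at this
  obtain ⟨y, hy⟩ := h _ hA.1 _ hxB
  simp only [mem_inter, mem_insert] at hy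
  grind [disjoint_left]

lemma card_add_card_le_of_sdiff_mem (h : CrossIntersecting 𝒜 ℬ)
    (h𝒜 : 𝒜 ⊆ 𝒞) (hℬ : ∀ B ∈ ℬ, B ⊆ U ∧ U \ B ∈ 𝒞) : #𝒜 + #ℬ ≤ #𝒞 := by
  have hinj : Set.InjOn (U \ ·) ℬ := fun B hB B' hB' hBB' => by
    rw [← sdiff_sdiff_eq_self (hℬ B hB).1, ← sdiff_sdiff_eq_self (hℬ B' hB').1]
    exact congrArg (U \ ·) hBB'
  have hdisj : Disjoint 𝒜 (ℬ.image (U \ ·)) := by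
    refine disjoint_right.2 fun C hC hC𝒜 => ?_
    obtain ⟨B, hB, rfl⟩ := mem_image.1 hC
    obtain ⟨x, hx⟩ := h _ hC𝒜 B hB
    simp at hx
  calc #𝒜 + #ℬ = #(𝒜 ∪ ℬ.image (U \ ·)) := by
        rw [card_union_of_disjoint hdisj, card_image_of_injOn hinj]
    _ ≤ #𝒞 := card_le_card (union_subset h𝒜 (image_subset_iff.2 fun B hB => (hℬ B hB).2))

end CrossIntersecting

def restrictedSlice (U : Finset α) (k : ℕ) (S : Finset α) (t : ℕ) : Finset (Finset α) :=
  {A ∈ powersetCard k U | t ≤ #(A ∩ S)}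

lemma mem_restrictedSlice :
    A ∈ restrictedSlice U k S t ↔ A ⊆ U ∧ #A = k ∧ t ≤ #(A ∩ S) := by
  rw [restrictedSlice, mem_filter, mem_powersetCard, and_assoc]

lemma le_of_mem_restrictedSlice (hA : A ∈ restrictedSlice U k S t) : t ≤ k := by
  obtain ⟨-, rfl, h⟩ := mem_restrictedSlice.1 hA
  exact h.trans (card_le_card inter_subset_left)

lemma compress_mem_restrictedSlice (hA : A ∈ restrictedSlice U k S t) (hx : x ∈ U)
    (hS : a ∈ S → x ∈ S) : UV.compress {x} {a} A ∈ restrictedSlice U k S t := by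
  obtain ⟨hAU, hAk, hAS⟩ := mem_restrictedSlice.1 hA
  exact mem_restrictedSlice.2 ⟨UV.compress_subset hAU hx,
    (UV.card_compress (by simp) A).trans hAk, hAS.trans (UV.card_inter_le_card_compress_inter S hS)⟩

lemma compression_subset_restrictedSlice (h𝒜 : 𝒜 ⊆ restrictedSlice U k S t) (hx : x ∈ U)
    (hS : a ∈ S → x ∈ S) : 𝓒 {x} {a} 𝒜 ⊆ restrictedSlice U k S t := by
  intro A hA
  obtain ⟨hA, -⟩ | ⟨-, B, hB, rfl⟩ := UV.mem_compression.1 hA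
  · exact h𝒜 hA
  · exact compress_mem_restrictedSlice (h𝒜 hB) hx hS

lemma nonMemberSubfamily_restrictedSlice_insert (ha : a ∉ U) :
    (restrictedSlice (insert a U) k S t).nonMemberSubfamily a = restrictedSlice U k S t := by
  ext A
  simp only [mem_nonMemberSubfamily, mem_restrictedSlice]
  constructor
  · rintro ⟨⟨hAU, hA⟩, haA⟩
    exact ⟨(subset_insert_iff_of_notMem haA).1 hAU, hA⟩
  · rintro ⟨hAU, hA⟩
    exact ⟨⟨hAU.trans (subset_insert _ _), hA⟩, fun h => ha (hAU h)⟩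

lemma memberSubfamily_restrictedSlice_insert (ha : a ∉ U) :
    (restrictedSlice (insert a U) (k + 1) S t).memberSubfamily a
      = restrictedSlice U k S (if a ∈ S then t - 1 else t) := by
  ext A
  simp only [mem_memberSubfamily, mem_restrictedSlice]
  constructor
  · rintro ⟨⟨hAU, hAk, hAS⟩, haA⟩
    refine ⟨(insert_subset_insert_iff haA).1 hAU, by simpa [haA] using hAk, ?_⟩
    split_ifs at * with haS
    · rw [insert_inter_of_mem haS, card_insert_of_notMem (by simp [haA])] at hAS
      omega
    · rwa [insert_inter_of_notMem haS] at hAS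
  · rintro ⟨hAU, hAk, hAS⟩
    have haA : a ∉ A := fun h => ha (hAU h)
    refine ⟨⟨insert_subset_insert _ hAU, by simp [haA, hAk], ?_⟩, haA⟩
    split_ifs at * with haS
    · rw [insert_inter_of_mem haS, card_insert_of_notMem (by simp [haA])]
      omega
    · rwa [insert_inter_of_notMem haS]

lemma sdiff_mem_restrictedSlice (hB : B ∈ restrictedSlice U l S t) (hU : #U = k + l)
    (hS : t + l ≤ #(U ∩ S)) : U \ B ∈ restrictedSlice U k S t := by
  obtain ⟨hBU, hBl, -⟩ := mem_restrictedSlice.1 hB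
  refine mem_restrictedSlice.2 ⟨sdiff_subset, by rw [card_sdiff_of_subset hBU]; omega, ?_⟩
  calc t ≤ #(U ∩ S) - #B := by omega
    _ ≤ #((U ∩ S) \ B) := le_card_sdiff _ _
    _ ≤ #((U \ B) ∩ S) := card_le_card fun x => by simp only [mem_sdiff, mem_inter]; tauto

lemma CrossIntersecting.card_add_card_le_card_restrictedSlice_of_card_eq
    (h : CrossIntersecting 𝒜 ℬ) (hU : #U = k + l) (hS : t + l ≤ #(U ∩ S))
    (h𝒜 : 𝒜 ⊆ restrictedSlice U k S t) (hℬ : ℬ ⊆ restrictedSlice U l S t) :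
    #𝒜 + #ℬ ≤ #(restrictedSlice U k S t) :=
  h.card_add_card_le_of_sdiff_mem h𝒜 fun _ hB =>
    ⟨(mem_restrictedSlice.1 (hℬ hB)).1, sdiff_mem_restrictedSlice (hℬ hB) hU hS⟩

lemma exists_shifted_restrictedSlice (hUS : a ∈ S → U ⊆ S)
    (h𝒜 : 𝒜 ⊆ restrictedSlice U k S t) (hℬ : ℬ ⊆ restrictedSlice U l S t)
    (h : CrossIntersecting 𝒜 ℬ) :
    ∃ 𝒜' ℬ', #𝒜' = #𝒜 ∧ #ℬ' = #ℬ ∧ 𝒜' ⊆ restrictedSlice U k S t ∧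
      ℬ' ⊆ restrictedSlice U l S t ∧ CrossIntersecting 𝒜' ℬ' ∧
      ∀ x ∈ U, ∀ B ∈ ℬ', UV.compress {x} {a} B ∈ ℬ' := by
  obtain ⟨𝒜', ℬ', h𝒜', hℬ', ⟨h𝒜S, hℬS, h'⟩, hshift⟩ := UV.exists_shifted
    (fun 𝒜 ℬ => 𝒜 ⊆ restrictedSlice U k S t ∧ ℬ ⊆ restrictedSlice U l S t ∧
      CrossIntersecting 𝒜 ℬ) U a
    (fun x hx _ _ ⟨h𝒜, hℬ, h⟩ => ⟨compression_subset_restrictedSlice h𝒜 hx (hUS · hx),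
      compression_subset_restrictedSlice hℬ hx (hUS · hx), h.compression⟩)
    ⟨h𝒜, hℬ, h⟩
  exact ⟨𝒜', ℬ', h𝒜', hℬ', h𝒜S, hℬS, h', hshift⟩

lemma card_filter_card_inter_eq (U S : Finset α) {i : ℕ} (hik : i ≤ k) :
    #{A ∈ powersetCard k U | #(A ∩ S) = i} = (#(U ∩ S)).choose i * (#(U \ S)).choose (k - i) := by
  rw [← card_powersetCard, ← card_powersetCard, ← card_product]
  refine card_nbij' (fun A => (A ∩ S, A \ S)) (fun p => p.1 ∪ p.2) ?_ ?_ ?_ ?_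
  · intro A hA
    simp only [coe_filter, mem_powersetCard, Set.mem_ofPred_eq, coe_product, Set.mem_prod,
      mem_coe, subset_inter_iff, subset_sdiff] at hA ⊢
    refine ⟨⟨⟨inter_subset_left.trans hA.1.1, inter_subset_right⟩, hA.2⟩,
      ⟨sdiff_subset.trans hA.1.1, sdiff_disjoint⟩, ?_⟩
    rw [card_sdiff, inter_comm, hA.2, hA.1.2]
  · rintro ⟨P, Q⟩ hPQ
    simp only [coe_product, Set.mem_prod, mem_coe, mem_powersetCard, subset_inter_iff,
      subset_sdiff] at hPQ
    obtain ⟨⟨⟨hPU, hPS⟩, hP⟩, ⟨hQU, hQS⟩, hQ⟩ := hPQ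
    simp only [coe_filter, mem_powersetCard, Set.mem_ofPred_eq]
    rw [union_inter_distrib_right, inter_eq_left.2 hPS, disjoint_iff_inter_eq_empty.1 hQS,
      union_empty, card_union_of_disjoint (disjoint_of_subset_left hPS hQS.symm), hP, hQ]
    exact ⟨⟨union_subset hPU hQU, by omega⟩, rfl⟩
  · intro A _
    exact sup_inf_sdiff A S
  · rintro ⟨P, Q⟩ hPQ
    simp only [coe_product, Set.mem_prod, mem_coe, mem_powersetCard, subset_inter_iff,
      subset_sdiff] at hPQ
    obtain ⟨⟨⟨-, hPS⟩, -⟩, ⟨-, hQS⟩, -⟩ := hPQ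
    simp only [Prod.mk.injEq]
    rw [union_inter_distrib_right, inter_eq_left.2 hPS, disjoint_iff_inter_eq_empty.1 hQS,
      union_sdiff_distrib, sdiff_eq_empty_iff_subset.2 hPS, hQS.sdiff_eq_left]
    simp

lemma card_restrictedSlice (U S : Finset α) (ht : t ≤ k + 1) :
    #(restrictedSlice U k S t)
      = (#U).choose k - ∑ i ∈ range t, (#(U ∩ S)).choose i * (#(U \ S)).choose (k - i) := by
  have hsplit := card_filter_add_card_filter_not (s := powersetCard k U)
    (fun A => t ≤ #(A ∩ S))
  have hbad : #{A ∈ powersetCard k U | ¬ t ≤ #(A ∩ S)}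
      = ∑ i ∈ range t, (#(U ∩ S)).choose i * (#(U \ S)).choose (k - i) := by
    rw [card_eq_sum_card_fiberwise (f := fun A => #(A ∩ S)) (t := range t)
      (fun A hA => by simp at hA ⊢; omega)]
    refine sum_congr rfl fun i hi => ?_
    rw [mem_range] at hi
    rw [filter_filter, ← card_filter_card_inter_eq U S (by omega)]
    congr 1
    exact filter_congr fun A _ => by omega
  rw [card_powersetCard] at hsplit
  rw [restrictedSlice]
  omega

end Finset

lemma Nat.card_Icc_one_inter_Icc_one (n m : ℕ) : #(Icc 1 n ∩ Icc 1 m) = min n m := by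
  rw [show Icc 1 n ∩ Icc 1 m = Icc 1 (min n m) by ext; simp; omega, Nat.card_Icc]
  rfl

lemma Nat.card_Icc_one_sdiff_Icc_one (n m : ℕ) : #(Icc 1 n \ Icc 1 m) = n - m := by
  rw [show Icc 1 n \ Icc 1 m = Icc (m + 1) n by ext; simp; omega, Nat.card_Icc]
  omega

section Icc

variable {n k t : ℕ} {S : Finset ℕ}

lemma nonMemberSubfamily_restrictedSlice_Icc :
    (restrictedSlice (Icc 1 (n + 1)) k S t).nonMemberSubfamily (n + 1)
      = restrictedSlice (Icc 1 n) k S t := by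
  rw [← insert_Icc_right_eq_Icc_add_one (by omega)]
  exact nonMemberSubfamily_restrictedSlice_insert (by simp)

lemma memberSubfamily_restrictedSlice_Icc :
    (restrictedSlice (Icc 1 (n + 1)) (k + 1) S t).memberSubfamily (n + 1)
      = restrictedSlice (Icc 1 n) k S (if n + 1 ∈ S then t - 1 else t) := by
  rw [← insert_Icc_right_eq_Icc_add_one (by omega)]
  exact memberSubfamily_restrictedSlice_insert (by simp)

end Icc

theorem card_add_card_le_card_restrictedSlice {m : ℕ} (n : ℕ) {k l t : ℕ}
    {𝒜 ℬ : Finset (Finset ℕ)} (htl : t ≤ l) (hlk : l ≤ k) (hkl : k + l ≤ n) (hm : l + t ≤ m)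
    (h𝒜 : 𝒜 ⊆ restrictedSlice (Icc 1 n) k (Icc 1 m) t)
    (hℬ : ℬ ⊆ restrictedSlice (Icc 1 n) l (Icc 1 m) t) (h : CrossIntersecting 𝒜 ℬ) :
    #𝒜 + #ℬ ≤ #(restrictedSlice (Icc 1 n) k (Icc 1 m) t) := by
  induction n generalizing k l t 𝒜 ℬ with
  | zero =>
    exact h.card_add_card_le_card_restrictedSlice_of_card_eq (by simp; omega)
      (by rw [Nat.card_Icc_one_inter_Icc_one]; omega) h𝒜 hℬ
  | succ n ih =>
  rcases hkl.eq_or_lt with hkl | hkl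
  · exact h.card_add_card_le_card_restrictedSlice_of_card_eq (by simp; omega)
      (by rw [Nat.card_Icc_one_inter_Icc_one]; omega) h𝒜 hℬ
  obtain ⟨𝒜, ℬ, h𝒜card, hℬcard, h𝒜, hℬ, h, hshift⟩ := exists_shifted_restrictedSlice
    (fun hn => Icc_subset_Icc le_rfl (mem_Icc.1 hn).2) h𝒜 hℬ h
  rw [← h𝒜card, ← hℬcard]
  refine card_add_card_le_of_memberSubfamily_of_nonMemberSubfamily (a := n + 1) ?_ ?_
  · rcases (ℬ.memberSubfamily (n + 1)).eq_empty_or_nonempty with hℬ₁ | ⟨B, hB⟩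
    · rw [hℬ₁, card_empty, add_zero]
      exact card_le_card (memberSubfamily_mono h𝒜)
    obtain ⟨hB', hnB⟩ := mem_memberSubfamily.1 hB
    obtain ⟨l, rfl⟩ : ∃ l', l = l' + 1 :=
      ⟨#B, by rw [← card_insert_of_notMem hnB, (mem_restrictedSlice.1 (hℬ hB')).2.1]⟩
    obtain ⟨k, rfl⟩ : ∃ k', k = k' + 1 := ⟨k - 1, by omega⟩
    have h𝒜₁ := memberSubfamily_mono (a := n + 1) h𝒜
    have hℬ₁ := memberSubfamily_mono (a := n + 1) hℬ
    rw [memberSubfamily_restrictedSlice_Icc] at h𝒜₁ hℬ₁ ⊢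
    refine ih (le_of_mem_restrictedSlice (hℬ₁ hB)) (by omega) (by omega) (by split_ifs <;> omega)
      h𝒜₁ hℬ₁ (h.memberSubfamily hshift fun A hA B hB => ?_)
    rw [(mem_restrictedSlice.1 (h𝒜 hA)).2.1, (mem_restrictedSlice.1 (hℬ hB)).2.1, Nat.card_Icc]
    omega
  · rw [nonMemberSubfamily_restrictedSlice_Icc]
    exact ih htl hlk (by omega) hm
      (nonMemberSubfamily_restrictedSlice_Icc ▸ nonMemberSubfamily_mono h𝒜)
      (nonMemberSubfamily_restrictedSlice_Icc ▸ nonMemberSubfamily_mono hℬ)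
      (h.mono nonMemberSubfamily_subset nonMemberSubfamily_subset)

lemma card_restrictedSlice_Icc {n m k t : ℕ} (htk : t ≤ k) :
    #(restrictedSlice (Icc 1 n) k (Icc 1 m) t)
      = n.choose k - ∑ i ∈ range t, m.choose i * (n - m).choose (k - i) := by
  rw [card_restrictedSlice _ _ (by omega), Nat.card_Icc, Nat.card_Icc_one_inter_Icc_one,
    Nat.card_Icc_one_sdiff_Icc_one, add_tsub_cancel_right]
  congr 1
  refine sum_congr rfl fun i hi => ?_
  rcases le_total m n with hmn | hnm
  · rw [min_eq_right hmn]
  · -- both terms vanish, as `i < t ≤ k`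
    rw [Nat.sub_eq_zero_of_le hnm, Nat.choose_eq_zero_of_lt (show 0 < k - i by simp at hi; omega),
      mul_zero, mul_zero]

theorem restricted_universe_bound_general
    (s k l n m : ℕ) (hs : s + 1 ≤ l) (hlk : l ≤ k) (hn : k + l ≤ n) (hm : l + s < m)
    (F G : Finset (Finset ℕ))
    (hF : ∀ A ∈ F, A ∈ powersetCard k (Icc 1 n) ∧ s + 1 ≤ (A ∩ Icc 1 m).card)
    (hG : ∀ B ∈ G, B ∈ powersetCard l (Icc 1 n) ∧ s + 1 ≤ (B ∩ Icc 1 m).card)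
    (hcross : ∀ A ∈ F, ∀ B ∈ G, (A ∩ B).Nonempty) :
    F.card + G.card ≤
      Nat.choose n k
        - ∑ i ∈ Finset.range (s + 1),
            Nat.choose m i * Nat.choose (n - m) (k - i) := by
  rw [← card_restrictedSlice_Icc (hs.trans hlk)]
  exact card_add_card_le_card_restrictedSlice n hs hlk hn (by omega)
    (fun A hA => mem_filter.2 (hF A hA)) (fun B hB => mem_filter.2 (hG B hB)) hcross
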